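/- Let X and Y be independent random vectors in ℝⁿ with absolutely continuous distributions, and let Z be uniformly distributed on the centered Euclidean ball D of volume one, independent of X and Y. Provided all entropies below are well-defined, h(X + Y) ≤ h(X + Z) + h(Y + Z). -/

import Mathlib

open MeasureTheory ProbabilityTheory Real Pointwise
open scoped ENNReal

/-- Differential (Shannon) entropy of a measure on ℝⁿ,
computed from its density w.r.t. Lebesgue measure: `h(μ) = -∫ p log p`. -/
noncomputable def dEnt {n : ℕ} (μ : Measure (EuclideanSpace ℝ (Fin n))) : ℝ :=
  -∫ x, ((μ.rnDeriv volume x).toReal) * Real.log ((μ.rnDeriv volume x).toReal)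

/-- The integrand whose integrability expresses that the entropy of `μ` is
well-defined and finite. -/
noncomputable def entIntegrand {n : ℕ} (μ : Measure (EuclideanSpace ℝ (Fin n))) :
    EuclideanSpace ℝ (Fin n) → ℝ :=
  fun x => ((μ.rnDeriv volume x).toReal) * Real.log ((μ.rnDeriv volume x).toReal)

/-!
Write `u, f, g, v` for the densities of `X + Y`, `X + Z`, `Y + Z` and `S = X + Y + Z`. Applying
`log t ≤ t - 1` to `v(S) / u(X+Y)` and to `f(X+Z) g(Y+Z) / v(S)` gives, pointwise,

  `log f(X+Z) + log g(Y+Z) - log u(X+Y) ≤ (v(S) / u(X+Y) - 1) + (f(X+Z) g(Y+Z) / v(S) - 1)`,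

and both expectations on the right are `≤ 0`. For the first, `Z` is independent of `X + Y`, so
`E[v(S) / u(X+Y)] ≤ ∫ v = 1`. For the second, the law of `Z` is Lebesgue measure restricted to
`D`, hence dominated by Lebesgue measure; replacing it by Lebesgue measure and substituting
`w = x + y + z` turns the expectation into `∫ (f ⋆ P_Y)(g ⋆ P_X) / v = ∫ v`, because `f ⋆ P_Y` and
`g ⋆ P_X` are both densities of `S`. Taking expectations, `h(X + Y) - h(X + Z) - h(Y + Z) ≤ 0`.
-/

namespace MeasureTheory.Measure

theorem lintegral_div_rnDeriv_le {E : Type*} [MeasurableSpace E]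
    {μ α : Measure E} [α.HaveLebesgueDecomposition μ] [SigmaFinite α] (hα : α ≪ μ)
    (k : E → ℝ≥0∞) :
    ∫⁻ x, k x / α.rnDeriv μ x ∂α ≤ ∫⁻ x, k x ∂μ := by
  nth_rw 1 [← withDensity_rnDeriv_eq α μ hα]
  rw [lintegral_withDensity_eq_lintegral_mul_non_measurable _ (measurable_rnDeriv α μ)
    (rnDeriv_lt_top α μ)]
  exact lintegral_mono fun x ↦ ENNReal.mul_div_le

variable {G : Type*} [AddCommGroup G] [MeasurableSpace G] [MeasurableAdd₂ G]
  {μ : Measure G} [SigmaFinite μ] [μ.IsAddLeftInvariant]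

theorem lintegral_prod_add_div_rnDeriv_le {α γ : Measure G} [SigmaFinite α]
    [IsProbabilityMeasure γ] (hα : α ≪ μ) {v : G → ℝ≥0∞} (hv : Measurable v) :
    ∫⁻ p, v (p.1 + p.2) / α.rnDeriv μ p.1 ∂(α.prod γ) ≤ ∫⁻ w, v w ∂μ :=
  calc ∫⁻ p, v (p.1 + p.2) / α.rnDeriv μ p.1 ∂(α.prod γ)
      = ∫⁻ x, (∫⁻ z, v (x + z) ∂γ) / α.rnDeriv μ x ∂α := by
        rw [lintegral_prod _ (by fun_prop)]
        simp_rw [div_eq_mul_inv]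
        exact lintegral_congr fun x ↦ lintegral_mul_const _ (by fun_prop)
    _ ≤ ∫⁻ x, ∫⁻ z, v (x + z) ∂γ ∂μ := lintegral_div_rnDeriv_le hα _
    _ = ∫⁻ w, v w ∂μ := by
        rw [lintegral_lintegral_swap (by fun_prop)]
        simp [lintegral_add_right_eq_self]

variable [MeasurableNeg G]

theorem conv_eq_withDensity_lintegral_rnDeriv {α β : Measure G} [SigmaFinite α] [SFinite β]
    (hα : α ≪ μ) :
    α ∗ β = μ.withDensity fun w ↦ ∫⁻ y, α.rnDeriv μ (w - y) ∂β := by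
  have hu : Measurable (α.rnDeriv μ) := measurable_rnDeriv α μ
  refine ext_of_lintegral _ fun φ hφ ↦ ?_
  rw [lintegral_conv hφ, lintegral_withDensity_eq_lintegral_mul _ (by fun_prop) hφ]
  nth_rw 1 [← withDensity_rnDeriv_eq α μ hα]
  rw [lintegral_withDensity_eq_lintegral_mul _ hu (by fun_prop)]
  calc ∫⁻ x, α.rnDeriv μ x * ∫⁻ y, φ (x + y) ∂β ∂μ
      = ∫⁻ y, ∫⁻ x, α.rnDeriv μ x * φ (x + y) ∂μ ∂β := by
        rw [lintegral_lintegral_swap (by fun_prop)]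
        refine lintegral_congr fun x ↦ (lintegral_const_mul _ (by fun_prop)).symm
    _ = ∫⁻ y, ∫⁻ w, α.rnDeriv μ (w - y) * φ w ∂μ ∂β := by
        refine lintegral_congr fun y ↦ ?_
        rw [← lintegral_add_right_eq_self (fun w ↦ α.rnDeriv μ (w - y) * φ w) y]
        simp only [add_sub_cancel_right]
    _ = ∫⁻ w, (∫⁻ y, α.rnDeriv μ (w - y) ∂β) * φ w ∂μ := by
        rw [lintegral_lintegral_swap (by fun_prop)]
        exact lintegral_congr fun w ↦ lintegral_mul_const _ (by fun_prop)

theorem rnDeriv_conv_ae_eq_lintegral_rnDeriv {α β : Measure G} [SigmaFinite α] [SFinite β]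
    (hα : α ≪ μ) :
    (α ∗ β).rnDeriv μ =ᵐ[μ] fun w ↦ ∫⁻ y, α.rnDeriv μ (w - y) ∂β := by
  rw [conv_eq_withDensity_lintegral_rnDeriv hα]
  exact rnDeriv_withDensity _ (by fun_prop)

theorem lintegral_prod_prod_mul_div_le {α β γ : Measure G} [SFinite α] [SFinite β] [SFinite γ]
    (hγ : γ ≤ μ) {f g v : G → ℝ≥0∞} (hf : Measurable f) (hg : Measurable g) (hv : Measurable v)
    (hvf : ∀ᵐ w ∂μ, v w = ∫⁻ y, f (w - y) ∂β) (hvg : ∀ᵐ w ∂μ, v w = ∫⁻ x, g (w - x) ∂α) :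
    ∫⁻ p, f (p.1 + p.2.2) * g (p.2.1 + p.2.2) / v (p.1 + p.2.1 + p.2.2) ∂(α.prod (β.prod γ))
      ≤ ∫⁻ w, v w ∂μ :=
  calc ∫⁻ p, f (p.1 + p.2.2) * g (p.2.1 + p.2.2) / v (p.1 + p.2.1 + p.2.2) ∂(α.prod (β.prod γ))
      = ∫⁻ x, ∫⁻ y, ∫⁻ z, f (x + z) * g (y + z) / v (x + y + z) ∂γ ∂β ∂α := by
        rw [lintegral_prod _ (by fun_prop)]
        exact lintegral_congr fun x ↦ lintegral_prod _ (by fun_prop)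
    _ ≤ ∫⁻ x, ∫⁻ y, ∫⁻ z, f (x + z) * g (y + z) / v (x + y + z) ∂μ ∂β ∂α := by
        gcongr
    _ = ∫⁻ x, ∫⁻ y, ∫⁻ w, f (w - y) * g (w - x) / v w ∂μ ∂β ∂α := by
        refine lintegral_congr fun x ↦ lintegral_congr fun y ↦ ?_
        rw [← lintegral_add_right_eq_self (fun w ↦ f (w - y) * g (w - x) / v w) (x + y)]
        congr! 3 <;> abel_nf
    _ = ∫⁻ x, ∫⁻ w, ∫⁻ y, f (w - y) * g (w - x) / v w ∂β ∂μ ∂α :=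
        lintegral_congr fun x ↦ lintegral_lintegral_swap (by fun_prop)
    _ = ∫⁻ w, ∫⁻ x, ∫⁻ y, g (w - x) * (v w)⁻¹ * f (w - y) ∂β ∂α ∂μ := by
        rw [lintegral_lintegral_swap (by fun_prop)]
        simp only [div_eq_mul_inv, mul_comm (f _), mul_assoc]
    _ = ∫⁻ w, (∫⁻ y, f (w - y) ∂β) * (∫⁻ x, g (w - x) ∂α) / v w ∂μ := by
        refine lintegral_congr fun w ↦ ?_
        rw [lintegral_lintegral_mul (by fun_prop) (by fun_prop),
          lintegral_mul_const _ (by fun_prop), div_eq_mul_inv]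
        ring
    _ = ∫⁻ w, v w * (v w / v w) ∂μ := by
        refine lintegral_congr_ae ?_
        filter_upwards [hvf, hvg] with w hwf hwg
        rw [← hwf, ← hwg, mul_div_assoc]
    _ ≤ ∫⁻ w, v w ∂μ := lintegral_mono fun w ↦ ENNReal.mul_div_le

end MeasureTheory.Measure

theorem Real.log_add_log_sub_log_le {a b c d : ℝ} (ha : 0 < a) (hb : 0 < b) (hc : 0 < c)
    (hd : 0 < d) : log b + log c - log a ≤ d / a - 1 + (b * c / d - 1) := by
  have h₁ := log_le_sub_one_of_pos (div_pos hd ha)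
  have h₂ := log_le_sub_one_of_pos (div_pos (mul_pos hb hc) hd)
  rw [log_div hd.ne' ha.ne'] at h₁
  rw [log_div (mul_pos hb hc).ne' hd.ne', log_mul hb.ne' hc.ne'] at h₂
  linarith

section Density

variable {E : Type*} [MeasurableSpace E] {μ : Measure E} [SigmaFinite μ]
  {Ω : Type*} [MeasurableSpace Ω] {P : Measure Ω} [IsFiniteMeasure P] {W : Ω → E}

theorem ae_toReal_rnDeriv_map_pos (hW : Measurable W) (hac : P.map W ≪ μ) :
    ∀ᵐ ω ∂P, 0 < ((P.map W).rnDeriv μ (W ω)).toReal := by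
  refine ae_of_ae_map (p := fun x ↦ 0 < ((P.map W).rnDeriv μ x).toReal) hW.aemeasurable ?_
  filter_upwards [Measure.rnDeriv_pos hac, hac.ae_le (Measure.rnDeriv_ne_top (P.map W) μ)]
    with x h₀ h_top
  exact ENNReal.toReal_pos h₀.ne' h_top

theorem integral_rnDeriv_map_mul_log (hW : Measurable W) (hac : P.map W ≪ μ) :
    ∫ x, ((P.map W).rnDeriv μ x).toReal * log ((P.map W).rnDeriv μ x).toReal ∂μ
      = ∫ ω, llr (P.map W) μ (W ω) ∂P := by
  rw [integral_rnDeriv_mul_log hac,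
    integral_map hW.aemeasurable (measurable_llr _ _).aestronglyMeasurable]

theorem integrable_llr_comp_of_integrable_rnDeriv_map_mul_log (hW : Measurable W)
    (hac : P.map W ≪ μ)
    (h : Integrable (fun x ↦ ((P.map W).rnDeriv μ x).toReal
      * log ((P.map W).rnDeriv μ x).toReal) μ) :
    Integrable (fun ω ↦ llr (P.map W) μ (W ω)) P :=
  ((integrable_rnDeriv_mul_log_iff hac).mp h).comp_measurable hW

end Density

theorem integral_log_add_integral_log_le {Ω : Type*} [MeasurableSpace Ω] {P : Measure Ω}
    [IsProbabilityMeasure P] {a b c d : Ω → ℝ≥0∞}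
    (ha : ∀ᵐ ω ∂P, 0 < (a ω).toReal) (hb : ∀ᵐ ω ∂P, 0 < (b ω).toReal)
    (hc : ∀ᵐ ω ∂P, 0 < (c ω).toReal) (hd : ∀ᵐ ω ∂P, 0 < (d ω).toReal)
    (hla : Integrable (fun ω ↦ log (a ω).toReal) P) (hlb : Integrable (fun ω ↦ log (b ω).toReal) P)
    (hlc : Integrable (fun ω ↦ log (c ω).toReal) P)
    (hda : AEMeasurable (fun ω ↦ d ω / a ω) P) (hbcd : AEMeasurable (fun ω ↦ b ω * c ω / d ω) P)
    (hda_le : ∫⁻ ω, d ω / a ω ∂P ≤ 1) (hbcd_le : ∫⁻ ω, b ω * c ω / d ω ∂P ≤ 1) :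
    ∫ ω, log (b ω).toReal ∂P + ∫ ω, log (c ω).toReal ∂P ≤ ∫ ω, log (a ω).toReal ∂P := by
  have toReal_of_le_one {k : Ω → ℝ≥0∞} (hk : AEMeasurable k P) (h : ∫⁻ ω, k ω ∂P ≤ 1) :
      Integrable (fun ω ↦ (k ω).toReal) P ∧ ∫ ω, (k ω).toReal ∂P ≤ 1 := by
    have hne : ∫⁻ ω, k ω ∂P ≠ ∞ := ne_top_of_le_ne_top ENNReal.one_ne_top h
    refine ⟨integrable_toReal_of_lintegral_ne_top hk hne, ?_⟩
    rw [integral_toReal hk (ae_lt_top' hk hne)]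
    exact ENNReal.toReal_le_of_le_ofReal zero_le_one (by simpa using h)
  obtain ⟨hA, hA_le⟩ := toReal_of_le_one hda hda_le
  obtain ⟨hB, hB_le⟩ := toReal_of_le_one hbcd hbcd_le
  have hpointwise : ∀ᵐ ω ∂P, log (b ω).toReal + log (c ω).toReal - log (a ω).toReal
      ≤ (d ω / a ω).toReal - 1 + ((b ω * c ω / d ω).toReal - 1) := by
    filter_upwards [ha, hb, hc, hd] with ω ha hb hc hd
    simpa only [ENNReal.toReal_div, ENNReal.toReal_mul] using
      log_add_log_sub_log_le ha hb hc hd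
  have hbc : Integrable (fun ω ↦ log (b ω).toReal + log (c ω).toReal) P := hlb.add hlc
  have hA1 : Integrable (fun ω ↦ (d ω / a ω).toReal - 1) P := hA.sub (integrable_const 1)
  have hB1 : Integrable (fun ω ↦ (b ω * c ω / d ω).toReal - 1) P := hB.sub (integrable_const 1)
  suffices ∫ ω, log (b ω).toReal ∂P + ∫ ω, log (c ω).toReal ∂P - ∫ ω, log (a ω).toReal ∂P ≤ 0 by
    linarith
  calc ∫ ω, log (b ω).toReal ∂P + ∫ ω, log (c ω).toReal ∂P - ∫ ω, log (a ω).toReal ∂P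
      = ∫ ω, (log (b ω).toReal + log (c ω).toReal - log (a ω).toReal) ∂P := by
        rw [integral_sub hbc hla, integral_add hlb hlc]
    _ ≤ ∫ ω, ((d ω / a ω).toReal - 1 + ((b ω * c ω / d ω).toReal - 1)) ∂P :=
        integral_mono_ae (hbc.sub hla) (hA1.add hB1) hpointwise
    _ = (∫ ω, (d ω / a ω).toReal ∂P - 1) + (∫ ω, (b ω * c ω / d ω).toReal ∂P - 1) := by
        rw [integral_add hA1 hB1, integral_sub hA (integrable_const 1),
          integral_sub hB (integrable_const 1)]
        simp
    _ ≤ 0 := by linarith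

namespace ProbabilityTheory

theorem iIndepFun.map_prodMk_prodMk_eq {β Ω : Type*} [MeasurableSpace β] [MeasurableSpace Ω]
    {P : Measure Ω} [IsFiniteMeasure P] {X Y Z : Ω → β} (hX : Measurable X)
    (hY : Measurable Y) (hZ : Measurable Z) (h : iIndepFun ![X, Y, Z] P) :
    P.map (fun ω ↦ (X ω, (Y ω, Z ω))) = (P.map X).prod ((P.map Y).prod (P.map Z)) := by
  have hmeas : ∀ i, Measurable (![X, Y, Z] i) := fun i ↦ by fin_cases i <;> assumption
  rw [(indepFun_iff_map_prod_eq_prod_map_map hX.aemeasurable (hY.prodMk hZ).aemeasurable).mp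
      (h.indepFun_prodMk hmeas 1 2 0 (by decide) (by decide)).symm,
    (indepFun_iff_map_prod_eq_prod_map_map hY.aemeasurable hZ.aemeasurable).mp
      (h.indepFun (show (1 : Fin 3) ≠ 2 by decide))]

variable {G : Type*} [AddCommGroup G] [MeasurableSpace G] [MeasurableAdd₂ G]
  {μ : Measure G} [μ.IsAddLeftInvariant]
  {Ω : Type*} [MeasurableSpace Ω] {P : Measure Ω}

theorem IndepFun.map_add_absolutelyContinuous [IsFiniteMeasure P] {V W : Ω → G}
    (h : IndepFun V W P) (hV : Measurable V) (hW : Measurable W) (hW_ac : P.map W ≪ μ) :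
    P.map (fun ω ↦ V ω + W ω) ≪ μ := by
  rw [show (fun ω ↦ V ω + W ω) = V + W from rfl, h.map_add_eq_map_conv_map hV hW]
  exact Measure.conv_absolutelyContinuous hW_ac

theorem IndepFun.rnDeriv_map_add_ae_eq [SigmaFinite μ] [MeasurableNeg G] [IsFiniteMeasure P]
    {V W : Ω → G} (h : IndepFun V W P) (hV : Measurable V) (hW : Measurable W)
    (hV_ac : P.map V ≪ μ) :
    (P.map fun ω ↦ V ω + W ω).rnDeriv μ
      =ᵐ[μ] fun s ↦ ∫⁻ t, (P.map V).rnDeriv μ (s - t) ∂(P.map W) := by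
  rw [show (fun ω ↦ V ω + W ω) = V + W from rfl, h.map_add_eq_map_conv_map hV hW]
  exact Measure.rnDeriv_conv_ae_eq_lintegral_rnDeriv hV_ac

variable [SigmaFinite μ] [IsProbabilityMeasure P]

theorem IndepFun.lintegral_add_div_rnDeriv_map_le {W Z : Ω → G} (h : IndepFun W Z P)
    (hW : Measurable W) (hZ : Measurable Z) (hW_ac : P.map W ≪ μ) {v : G → ℝ≥0∞}
    (hv : Measurable v) :
    ∫⁻ ω, v (W ω + Z ω) / (P.map W).rnDeriv μ (W ω) ∂P ≤ ∫⁻ w, v w ∂μ := by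
  have := Measure.isProbabilityMeasure_map (μ := P) hZ.aemeasurable
  calc ∫⁻ ω, v (W ω + Z ω) / (P.map W).rnDeriv μ (W ω) ∂P
      = ∫⁻ p, v (p.1 + p.2) / (P.map W).rnDeriv μ p.1 ∂(P.map fun ω ↦ (W ω, Z ω)) := by
        rw [lintegral_map (by fun_prop) (hW.prodMk hZ)]
    _ ≤ ∫⁻ w, v w ∂μ := by
        rw [(indepFun_iff_map_prod_eq_prod_map_map hW.aemeasurable hZ.aemeasurable).mp h]
        exact Measure.lintegral_prod_add_div_rnDeriv_le hW_ac hv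

variable [MeasurableNeg G]

theorem iIndepFun.lintegral_mul_div_rnDeriv_map_le {X Y Z : Ω → G} (hX : Measurable X)
    (hY : Measurable Y) (hZ : Measurable Z) (h : iIndepFun ![X, Y, Z] P) (hZμ : P.map Z ≤ μ) :
    ∫⁻ ω, (P.map fun ω ↦ X ω + Z ω).rnDeriv μ (X ω + Z ω)
        * (P.map fun ω ↦ Y ω + Z ω).rnDeriv μ (Y ω + Z ω)
        / (P.map fun ω ↦ X ω + Y ω + Z ω).rnDeriv μ (X ω + Y ω + Z ω) ∂P ≤ 1 := by
  have hmeas : ∀ i, Measurable (![X, Y, Z] i) := fun i ↦ by fin_cases i <;> assumption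
  have hZ_ac : P.map Z ≪ μ := Measure.absolutelyContinuous_of_le hZμ
  have hXZ_Y : IndepFun (fun ω ↦ X ω + Z ω) Y P :=
    h.indepFun_add_left hmeas 0 2 1 (by decide) (by decide)
  have hYZ_X : IndepFun (fun ω ↦ Y ω + Z ω) X P :=
    h.indepFun_add_left hmeas 1 2 0 (by decide) (by decide)
  have hv_f := hXZ_Y.rnDeriv_map_add_ae_eq (hX.add hZ) hY
    ((h.indepFun (show (0 : Fin 3) ≠ 2 by decide)).map_add_absolutelyContinuous hX hZ hZ_ac)
  have hv_g := hYZ_X.rnDeriv_map_add_ae_eq (hY.add hZ) hX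
    ((h.indepFun (show (1 : Fin 3) ≠ 2 by decide)).map_add_absolutelyContinuous hY hZ hZ_ac)
  rw [show (fun ω ↦ X ω + Z ω + Y ω) = fun ω ↦ X ω + Y ω + Z ω from
    funext fun ω ↦ add_right_comm _ _ _] at hv_f
  rw [show (fun ω ↦ Y ω + Z ω + X ω) = fun ω ↦ X ω + Y ω + Z ω from
    funext fun ω ↦ by abel] at hv_g
  set f := (P.map fun ω ↦ X ω + Z ω).rnDeriv μ
  set g := (P.map fun ω ↦ Y ω + Z ω).rnDeriv μ
  set v := (P.map fun ω ↦ X ω + Y ω + Z ω).rnDeriv μ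
  calc ∫⁻ ω, f (X ω + Z ω) * g (Y ω + Z ω) / v (X ω + Y ω + Z ω) ∂P
      = ∫⁻ p, f (p.1 + p.2.2) * g (p.2.1 + p.2.2) / v (p.1 + p.2.1 + p.2.2)
          ∂(P.map fun ω ↦ (X ω, (Y ω, Z ω))) := by
        rw [lintegral_map (by fun_prop) (hX.prodMk (hY.prodMk hZ))]
    _ ≤ ∫⁻ w, v w ∂μ := by
        rw [h.map_prodMk_prodMk_eq hX hY hZ]
        exact Measure.lintegral_prod_prod_mul_div_le hZμ (by fun_prop) (by fun_prop)
          (by fun_prop) hv_f hv_g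
    _ ≤ 1 := Measure.lintegral_rnDeriv_le.trans_eq
        (Measure.isProbabilityMeasure_map ((hX.add hY).add hZ).aemeasurable).measure_univ

theorem iIndepFun.integral_rnDeriv_mul_log_map_add_le {X Y Z : Ω → G} (hX : Measurable X)
    (hY : Measurable Y) (hZ : Measurable Z) (h : iIndepFun ![X, Y, Z] P) (hY_ac : P.map Y ≪ μ)
    (hZμ : P.map Z ≤ μ)
    (hXY_int : Integrable (fun x ↦ ((P.map fun ω ↦ X ω + Y ω).rnDeriv μ x).toReal
      * log ((P.map fun ω ↦ X ω + Y ω).rnDeriv μ x).toReal) μ)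
    (hXZ_int : Integrable (fun x ↦ ((P.map fun ω ↦ X ω + Z ω).rnDeriv μ x).toReal
      * log ((P.map fun ω ↦ X ω + Z ω).rnDeriv μ x).toReal) μ)
    (hYZ_int : Integrable (fun x ↦ ((P.map fun ω ↦ Y ω + Z ω).rnDeriv μ x).toReal
      * log ((P.map fun ω ↦ Y ω + Z ω).rnDeriv μ x).toReal) μ) :
    ∫ x, ((P.map fun ω ↦ X ω + Z ω).rnDeriv μ x).toReal
        * log ((P.map fun ω ↦ X ω + Z ω).rnDeriv μ x).toReal ∂μ
      + ∫ x, ((P.map fun ω ↦ Y ω + Z ω).rnDeriv μ x).toReal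
        * log ((P.map fun ω ↦ Y ω + Z ω).rnDeriv μ x).toReal ∂μ
      ≤ ∫ x, ((P.map fun ω ↦ X ω + Y ω).rnDeriv μ x).toReal
        * log ((P.map fun ω ↦ X ω + Y ω).rnDeriv μ x).toReal ∂μ := by
  have hmeas : ∀ i, Measurable (![X, Y, Z] i) := fun i ↦ by fin_cases i <;> assumption
  have hZ_ac : P.map Z ≪ μ := Measure.absolutelyContinuous_of_le hZμ
  have hXY : IndepFun X Y P := h.indepFun (show (0 : Fin 3) ≠ 1 by decide)
  have hXZ : IndepFun X Z P := h.indepFun (show (0 : Fin 3) ≠ 2 by decide)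
  have hYZ : IndepFun Y Z P := h.indepFun (show (1 : Fin 3) ≠ 2 by decide)
  have hXY_Z : IndepFun (fun ω ↦ X ω + Y ω) Z P :=
    h.indepFun_add_left hmeas 0 1 2 (by decide) (by decide)
  have hXY_ac := hXY.map_add_absolutelyContinuous hX hY hY_ac
  have hXZ_ac := hXZ.map_add_absolutelyContinuous hX hZ hZ_ac
  have hYZ_ac := hYZ.map_add_absolutelyContinuous hY hZ hZ_ac
  have hXYZ_ac := hXY_Z.map_add_absolutelyContinuous (hX.add hY) hZ hZ_ac
  rw [integral_rnDeriv_map_mul_log (by fun_prop) hXY_ac,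
    integral_rnDeriv_map_mul_log (by fun_prop) hXZ_ac,
    integral_rnDeriv_map_mul_log (by fun_prop) hYZ_ac]
  exact integral_log_add_integral_log_le
    (ae_toReal_rnDeriv_map_pos (by fun_prop) hXY_ac)
    (ae_toReal_rnDeriv_map_pos (by fun_prop) hXZ_ac)
    (ae_toReal_rnDeriv_map_pos (by fun_prop) hYZ_ac)
    (ae_toReal_rnDeriv_map_pos (by fun_prop) hXYZ_ac)
    (integrable_llr_comp_of_integrable_rnDeriv_map_mul_log (by fun_prop) hXY_ac hXY_int)
    (integrable_llr_comp_of_integrable_rnDeriv_map_mul_log (by fun_prop) hXZ_ac hXZ_int)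
    (integrable_llr_comp_of_integrable_rnDeriv_map_mul_log (by fun_prop) hYZ_ac hYZ_int)
    (by fun_prop) (by fun_prop)
    ((hXY_Z.lintegral_add_div_rnDeriv_map_le (hX.add hY) hZ hXY_ac (by fun_prop)).trans
      (Measure.lintegral_rnDeriv_le.trans_eq
        (Measure.isProbabilityMeasure_map ((hX.add hY).add hZ).aemeasurable).measure_univ))
    (h.lintegral_mul_div_rnDeriv_map_le hX hY hZ hZμ)

end ProbabilityTheory

theorem entropy_sum_le_sum_with_uniform_ball_general
    {n : ℕ}
    {Ω : Type} [MeasureSpace Ω] (hP : IsProbabilityMeasure (ℙ : Measure Ω))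
    (X Y Z : Ω → EuclideanSpace ℝ (Fin n))
    (hX : Measurable X) (hY : Measurable Y) (hZ : Measurable Z)
    (hIndep : iIndepFun (m := fun _ : Fin 3 =>
        (inferInstance : MeasurableSpace (EuclideanSpace ℝ (Fin n))))
      ![X, Y, Z] (ℙ : Measure Ω))
    (hYac : Measure.map Y (ℙ : Measure Ω) ≪ volume)
    (r : ℝ)
    (hZunif : Measure.map Z (ℙ : Measure Ω)
      = volume.restrict (Metric.ball (0 : EuclideanSpace ℝ (Fin n)) r))
    (hXY : Integrable
      (entIntegrand (Measure.map (fun ω => X ω + Y ω) (ℙ : Measure Ω))) volume)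
    (hXZ : Integrable
      (entIntegrand (Measure.map (fun ω => X ω + Z ω) (ℙ : Measure Ω))) volume)
    (hYZ : Integrable
      (entIntegrand (Measure.map (fun ω => Y ω + Z ω) (ℙ : Measure Ω))) volume) :
    dEnt (Measure.map (fun ω => X ω + Y ω) (ℙ : Measure Ω))
    ≤ dEnt (Measure.map (fun ω => X ω + Z ω) (ℙ : Measure Ω))
      + dEnt (Measure.map (fun ω => Y ω + Z ω) (ℙ : Measure Ω)) := by
  have hZ_le : Measure.map Z ℙ ≤ volume := hZunif ▸ Measure.restrict_le_self
  have h_neg := hIndep.integral_rnDeriv_mul_log_map_add_le hX hY hZ hYac hZ_le hXY hXZ hYZ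
  simp only [dEnt]
  linarith

/-- If `X, Y` are independent absolutely continuous random vectors in ℝⁿ and `Z`
is uniform on the centered Euclidean ball of volume one, independent of `X, Y`,
then `h(X+Y) ≤ h(X+Z) + h(Y+Z)` (provided these entropies are well-defined). -/
theorem entropy_sum_le_sum_with_uniform_ball
    {n : ℕ} (hn : 1 ≤ n)
    {Ω : Type} [MeasureSpace Ω] (hP : IsProbabilityMeasure (ℙ : Measure Ω))
    (X Y Z : Ω → EuclideanSpace ℝ (Fin n))
    (hX : Measurable X) (hY : Measurable Y) (hZ : Measurable Z)
    (hIndep : iIndepFun (m := fun _ : Fin 3 =>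
        (inferInstance : MeasurableSpace (EuclideanSpace ℝ (Fin n))))
      ![X, Y, Z] (ℙ : Measure Ω))
    (hXac : Measure.map X (ℙ : Measure Ω) ≪ volume)
    (hYac : Measure.map Y (ℙ : Measure Ω) ≪ volume)
    (r : ℝ) (hr : 0 < r)
    (hD : volume (Metric.ball (0 : EuclideanSpace ℝ (Fin n)) r) = 1)
    (hZunif : Measure.map Z (ℙ : Measure Ω)
      = volume.restrict (Metric.ball (0 : EuclideanSpace ℝ (Fin n)) r))
    (hXY : Integrable
      (entIntegrand (Measure.map (fun ω => X ω + Y ω) (ℙ : Measure Ω))) volume)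
    (hXZ : Integrable
      (entIntegrand (Measure.map (fun ω => X ω + Z ω) (ℙ : Measure Ω))) volume)
    (hYZ : Integrable
      (entIntegrand (Measure.map (fun ω => Y ω + Z ω) (ℙ : Measure Ω))) volume) :
    dEnt (Measure.map (fun ω => X ω + Y ω) (ℙ : Measure Ω))
    ≤ dEnt (Measure.map (fun ω => X ω + Z ω) (ℙ : Measure Ω))
      + dEnt (Measure.map (fun ω => Y ω + Z ω) (ℙ : Measure Ω)) :=
  entropy_sum_le_sum_with_uniform_ball_general hP X Y Z hX hY hZ hIndep hYac r hZunif hXY hXZ hYZ
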